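/- arXiv:2509.05711 — 3 statements merged into one kernel-verified Lean document; each statement's English description precedes it below -/
import Mathlib

section
/- Let A ⊂ [0, 2π) and r > 0. Define T = {(ρ cos θ, ρ sin θ) : θ ∈ A, ρ ∈ [0, r]} ⊂ ℝ². Then the Lebesgue outer measure of T equals (1/2) r² times the one-dimensional Lebesgue outer measure of A. -/
/-!
The polar map `(ρ, θ) ↦ (ρ cos θ, ρ sin θ)` is injective on `(0, ∞) × [a, a + 2π)` with Jacobian
`ρ`, so by the change of variables formula it carries the measure `ρ dρ dθ` to planar Lebesgue
measure on measurable sets. Since the map is measurable, comparing measurable hulls upstairs and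
downstairs extends this to arbitrary sets. For the rectangle `(0, r] × A` the measure `ρ dρ dθ` is
`(r² / 2) · ℒ₁*(A)`, because a product of s-finite measures is multiplicative on all rectangles;
the missing side `ρ = 0` only contributes the origin.
-/

open MeasureTheory Set

theorem measure_image_eq_of_forall_measurableSet {α β : Type*} [MeasurableSpace α]
    [MeasurableSpace β] {μ : Measure α} {ν : Measure β} {f : α → β} {D : Set α}
    (hf : Measurable f) (hD : MeasurableSet D)
    (h : ∀ u, MeasurableSet u → u ⊆ D → ν (f '' u) = μ u) {s : Set α} (hs : s ⊆ D) :
    ν (f '' s) = μ s := by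
  apply le_antisymm
  · have hu : MeasurableSet (toMeasurable μ s ∩ D) := (measurableSet_toMeasurable _ _).inter hD
    calc ν (f '' s) ≤ ν (f '' (toMeasurable μ s ∩ D)) :=
          measure_mono (image_mono (subset_inter (subset_toMeasurable _ _) hs))
      _ = μ (toMeasurable μ s ∩ D) := h _ hu inter_subset_right
      _ ≤ μ s := (measure_mono inter_subset_left).trans_eq (measure_toMeasurable _)
  · have hv : MeasurableSet (f ⁻¹' toMeasurable ν (f '' s) ∩ D) :=
      (hf (measurableSet_toMeasurable _ _)).inter hD
    calc μ s ≤ μ (f ⁻¹' toMeasurable ν (f '' s) ∩ D) :=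
          measure_mono fun x hx ↦ ⟨subset_toMeasurable _ _ (mem_image_of_mem f hx), hs hx⟩
      _ = ν (f '' (f ⁻¹' toMeasurable ν (f '' s) ∩ D)) := (h _ hv inter_subset_right).symm
      _ ≤ ν (f '' s) :=
          (measure_mono ((image_mono inter_subset_left).trans (image_preimage_subset _ _))).trans_eq
            (measure_toMeasurable _)

theorem injOn_polarCoord_symm (a : ℝ) :
    InjOn polarCoord.symm (Ioi 0 ×ˢ Ico a (a + 2 * Real.pi)) := by
  rintro ⟨ρ, θ⟩ ⟨hρ, hθ⟩ ⟨ρ', θ'⟩ ⟨hρ', hθ'⟩ h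
  simp only [polarCoord_symm_apply, Prod.mk.injEq] at h hρ hρ' hθ hθ'
  obtain ⟨hx, hy⟩ := h
  have hρρ' : ρ = ρ' := by
    have hsq : ρ ^ 2 = ρ' ^ 2 := by
      linear_combination (ρ * Real.cos θ + ρ' * Real.cos θ') * hx
        + (ρ * Real.sin θ + ρ' * Real.sin θ') * hy
        - ρ ^ 2 * Real.sin_sq_add_cos_sq θ + ρ' ^ 2 * Real.sin_sq_add_cos_sq θ'
    exact (pow_left_inj₀ hρ.le hρ'.le two_ne_zero).1 hsq
  subst hρρ'
  have hangle : (θ : Real.Angle) = θ' :=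
    Real.Angle.cos_sin_inj (mul_left_cancel₀ hρ.ne' hx) (mul_left_cancel₀ hρ.ne' hy)
  have : Fact (0 < 2 * Real.pi) := ⟨by positivity⟩
  rw [Prod.mk.injEq]
  exact ⟨rfl, (AddCircle.coe_eq_coe_iff_of_mem_Ico hθ hθ').1 hangle⟩

theorem volume_image_polarCoord_symm {a : ℝ} {s : Set (ℝ × ℝ)}
    (hs : s ⊆ Ioi 0 ×ˢ Ico a (a + 2 * Real.pi)) :
    volume (polarCoord.symm '' s) = volume.withDensity (fun p : ℝ × ℝ ↦ ENNReal.ofReal p.1) s := by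
  refine measure_image_eq_of_forall_measurableSet continuous_polarCoord_symm.measurable
    (measurableSet_Ioi.prod measurableSet_Ico) (fun u hu huD ↦ ?_) hs
  rw [withDensity_apply _ hu, ← lintegral_abs_det_fderiv_eq_addHaar_image volume hu
    (fun p _ ↦ (hasFDerivAt_polarCoord_symm p).hasFDerivWithinAt)
    ((injOn_polarCoord_symm a).mono huD)]
  refine setLIntegral_congr_fun hu fun p hp ↦ ?_
  rw [det_fderivPolarCoordSymm, abs_of_pos (huD hp).1]

theorem volume_image_polarCoord_symm_Icc_prod {r : ℝ} (hr : 0 ≤ r) (A : Set ℝ) :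
    volume (polarCoord.symm '' (Icc 0 r ×ˢ A)) = volume (polarCoord.symm '' (Ioc 0 r ×ˢ A)) := by
  have hcentre : polarCoord.symm '' (Prod.mk 0 '' A) ⊆ {0} := by
    rintro _ ⟨_, ⟨θ, -, rfl⟩, rfl⟩
    simp
  rw [← Ioc_insert_left hr, insert_prod, image_union, union_comm]
  refine le_antisymm ?_ (measure_mono subset_union_left)
  calc _ ≤ _ + _ := measure_union_le _ _
    _ = _ := by rw [measure_mono_null hcentre (measure_singleton 0), add_zero]

theorem withDensity_ofReal_Ioc_zero {r : ℝ} (hr : 0 ≤ r) :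
    volume.withDensity (fun x : ℝ ↦ ENNReal.ofReal x) (Ioc 0 r) =
      ENNReal.ofReal (1 / 2 * r ^ 2) := by
  rw [withDensity_apply _ measurableSet_Ioc, ← ofReal_integral_eq_lintegral_ofReal
    (continuous_id'.integrableOn_Icc (a := 0) (b := r) |>.mono_set Ioc_subset_Icc_self)
    ((ae_restrict_iff' measurableSet_Ioc).2 (.of_forall fun x hx ↦ hx.1.le)),
    ← intervalIntegral.integral_of_le hr, integral_id]
  ring_nf

/-- The polar image of `A × [0, r]` has planar Lebesgue outer measure `(1/2) r² · ℒ₁*(A)`. -/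
theorem polar_sector_outer_measure (A : Set ℝ) (hA : A ⊆ Set.Ico 0 (2 * Real.pi))
    (r : ℝ) (hr : 0 < r) :
    volume {p : ℝ × ℝ | ∃ θ ∈ A, ∃ ρ ∈ Set.Icc (0 : ℝ) r,
        p = (ρ * Real.cos θ, ρ * Real.sin θ)} =
      ENNReal.ofReal (1 / 2 * r ^ 2) * volume A := by
  have hT : {p : ℝ × ℝ | ∃ θ ∈ A, ∃ ρ ∈ Set.Icc (0 : ℝ) r,
      p = (ρ * Real.cos θ, ρ * Real.sin θ)} = polarCoord.symm '' (Icc 0 r ×ˢ A) := by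
    ext p
    simp only [mem_ofPred_eq, mem_image, mem_prod, Prod.exists, polarCoord_symm_apply]
    aesop
  have hsub : Ioc 0 r ×ˢ A ⊆ Ioi 0 ×ˢ Ico 0 (0 + 2 * Real.pi) := by
    rw [zero_add]
    exact prod_mono Ioc_subset_Ioi_self hA
  rw [hT, volume_image_polarCoord_symm_Icc_prod hr.le, volume_image_polarCoord_symm hsub,
    Measure.volume_eq_prod, ← prod_withDensity_left (f := fun ρ ↦ ENNReal.ofReal ρ) (by fun_prop),
    Measure.prod_prod, withDensity_ofReal_Ioc_zero hr.le]
end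

section
/- For every set E ⊂ ℝ², the two-dimensional Lebesgue outer measure of E is at least the upper integral over r ∈ (0, ∞) of the one-dimensional Hausdorff outer measure of E ∩ S_r, where S_r is the circle of radius r centered at the origin. -/
/-!
Transport `E` to `ℂ` by a linear isometry and replace it by a measurable hull `G` of the same
measure. For `r > 0` the section `G ∩ S_r` is covered by the image of the angle set
`{θ ∈ [-π, π] | r e^{iθ} ∈ G}` under the `r`-Lipschitz map `θ ↦ r e^{iθ}`, so its Hausdorff
measure is at most `r` times the Lebesgue measure of that angle set. This bound is measurable
in `r`, and by Tonelli and the polar change of variables its integral over `r > 0` is `vol G`.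
-/

open MeasureTheory Metric Set
open scoped Real ENNReal

theorem continuous_circleMap_uncurry (c : ℂ) :
    Continuous fun p : ℝ × ℝ => circleMap c p.1 p.2 := by
  simp only [circleMap]
  fun_prop

namespace Complex

theorem polarCoord_symm_eq_circleMap (p : ℝ × ℝ) :
    Complex.polarCoord.symm p = circleMap 0 p.1 p.2 := by
  rw [Complex.polarCoord_symm_apply, circleMap, zero_add, Complex.exp_mul_I]
  push_cast
  ring

/-- The closed interval of angles makes `θ ↦ r e^{iθ}` cover the whole circle `S_r`,
including the negative real axis where `arg = π`. -/
noncomputable def polarSection (G : Set ℂ) (r : ℝ) : ℝ≥0∞ :=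
  ENNReal.ofReal r * volume (circleMap 0 r ⁻¹' G ∩ Icc (-π) π)

theorem measurable_polarSection {G : Set ℂ} (hG : MeasurableSet G) :
    Measurable (polarSection G) := by
  have hS : MeasurableSet {p : ℝ × ℝ | circleMap 0 p.1 p.2 ∈ G} :=
    (continuous_circleMap_uncurry 0).measurable hG
  refine ENNReal.measurable_ofReal.mul ?_
  simp_rw [← Measure.restrict_apply' measurableSet_Icc]
  exact measurable_measure_prodMk_left hS

theorem hausdorffMeasure_inter_sphere_le_polarSection (G : Set ℂ) {r : ℝ} (hr : 0 ≤ r) :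
    μH[1] (G ∩ sphere 0 r) ≤ polarSection G r := by
  have hcover : G ∩ sphere 0 r ⊆ circleMap 0 r '' (circleMap 0 r ⁻¹' G ∩ Icc (-π) π) := by
    rintro z ⟨hzG, hz⟩
    have hcz : circleMap 0 r z.arg = z := by
      rw [circleMap, zero_add, ← mem_sphere_zero_iff_norm.1 hz, Complex.norm_mul_exp_arg_mul_I]
    exact ⟨z.arg, ⟨by rwa [mem_preimage, hcz], (Complex.neg_pi_lt_arg z).le, z.arg_le_pi⟩, hcz⟩
  calc μH[1] (G ∩ sphere 0 r)
      ≤ μH[1] (circleMap 0 r '' (circleMap 0 r ⁻¹' G ∩ Icc (-π) π)) := measure_mono hcover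
    _ ≤ (r.nnabs : ℝ≥0∞) ^ (1 : ℝ) * μH[1] (circleMap 0 r ⁻¹' G ∩ Icc (-π) π) :=
      (lipschitzWith_circleMap 0 r).hausdorffMeasure_image_le zero_le_one _
    _ = polarSection G r := by
      rw [ENNReal.rpow_one, hausdorffMeasure_real, polarSection, Real.nnabs_of_nonneg hr]
      rfl

theorem lintegral_polarSection {G : Set ℂ} (hG : MeasurableSet G) :
    ∫⁻ r in Ioi 0, polarSection G r = volume G := by
  -- the endpoints `±π` form a null set, so the section may be read on `polarCoord.target`
  have hsection : ∀ r, polarSection G r =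
      ∫⁻ θ in Ioo (-π) π, ENNReal.ofReal r * G.indicator 1 (circleMap 0 r θ) := by
    intro r
    rw [polarSection, ← Measure.restrict_apply' measurableSet_Icc,
      ← Measure.restrict_congr_set Ioo_ae_eq_Icc, lintegral_const_mul' _ _ ENNReal.ofReal_ne_top,
      ← lintegral_indicator_one (measurable_circleMap 0 r hG)]
    rfl
  calc ∫⁻ r in Ioi 0, polarSection G r
      = ∫⁻ p in polarCoord.target,
          ENNReal.ofReal p.1 * G.indicator 1 (circleMap 0 p.1 p.2) := by
        rw [polarCoord_target, Measure.volume_eq_prod, ← Measure.prod_restrict, lintegral_prod]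
        · simp_rw [hsection]
        · exact ((ENNReal.measurable_ofReal.comp measurable_fst).mul
            ((measurable_one.indicator hG).comp
              (continuous_circleMap_uncurry 0).measurable)).aemeasurable
    _ = ∫⁻ z, G.indicator 1 z := by
        simp_rw [← polarCoord_symm_eq_circleMap]
        exact Complex.lintegral_comp_polarCoord_symm _
    _ = volume G := lintegral_indicator_one hG

end Complex

open Complex in
/-- The planar Lebesgue outer measure of `E` dominates the upper integral over `r ∈ (0,∞)`
of the one-dimensional Hausdorff outer measure of the circular cross-sections `E ∩ S_r`. -/
theorem outer_measure_ge_upper_integral_circular_sections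
    (E : Set (EuclideanSpace ℝ (Fin 2))) :
    (⨅ (g : ℝ → ENNReal) (_ : Measurable g)
        (_ : ∀ r ∈ Set.Ioi (0 : ℝ), (μH[1] : Measure (EuclideanSpace ℝ (Fin 2)))
          (E ∩ sphere 0 r) ≤ g r),
      ∫⁻ r in Set.Ioi (0 : ℝ), g r) ≤ volume E := by
  let e : EuclideanSpace ℝ (Fin 2) ≃ₗᵢ[ℝ] ℂ := orthonormalBasisOneI.repr.symm
  set G := toMeasurable volume (e '' E)
  have hG : MeasurableSet G := measurableSet_toMeasurable _ _
  have hbound : ∀ r ∈ Ioi (0 : ℝ), μH[1] (E ∩ sphere 0 r) ≤ polarSection G r := fun r hr => calc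
    μH[1] (E ∩ sphere 0 r) = μH[1] (e '' E ∩ sphere 0 r) := by
      rw [← e.isometry.hausdorffMeasure_image (Or.inl zero_le_one), image_inter e.injective,
        e.image_sphere, map_zero]
    _ ≤ μH[1] (G ∩ sphere 0 r) := measure_mono (inter_subset_inter_left _ (subset_toMeasurable _ _))
    _ ≤ polarSection G r := hausdorffMeasure_inter_sphere_le_polarSection G hr.le
  calc _ ≤ ∫⁻ r in Ioi 0, polarSection G r :=
        iInf₂_le_of_le _ (measurable_polarSection hG) (iInf_le _ hbound)
    _ = volume (e '' E) := by rw [lintegral_polarSection hG, measure_toMeasurable]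
    _ = volume E := by
      rw [e.image_eq_preimage_symm]
      exact e.symm.measurePreserving.measure_preimage_emb e.symm.toHomeomorph.measurableEmbedding E
end

section
/- Let 0 < δ < r ≤ 1/2 and let Δ be the isosceles triangle with apex at the origin O, base a unit segment at distance δ from O (perpendicular bisector through O). Then the area of the part of Δ outside the open disk B_r of radius r centered at O equals (1/2)δ − ( δ·√(r²−δ²) + (arcsin(δ/r) − arctan(2δ))·r² ). -/
/-!
Slice horizontally. The triangle is `{δ |x| ≤ y / 2, y ≤ δ}`, so the slice of `Δ \ B_r` at
height `y` is `{√(r² - y²) ≤ |x| ≤ y / (2δ)}`. It is nonempty exactly for `r sin θ ≤ y ≤ δ`,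
where `θ = arctan (2δ)` is the polar angle of the legs and `r sin θ` the height at which the
circle crosses them; `r ≤ 1/2` makes the circle cross the base inside the segment, so that
`r sin θ ≤ δ`. The slice has length `2 (y / (2δ) - √(r² - y²))`, with antiderivative
`y² / (2δ) - y √(r² - y²) - r² arcsin (y / r)`. At `y = r sin θ` the first two terms cancel
and the last is `r² θ`.
-/

open MeasureTheory Metric Set

/-- A point of the Euclidean plane with given coordinates. -/
noncomputable def pt (x y : ℝ) : EuclideanSpace ℝ (Fin 2) :=
  (WithLp.equiv 2 (Fin 2 → ℝ)).symm ![x, y]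

open Real

@[simp] lemma pt_apply_zero (x y : ℝ) : pt x y 0 = x := by simp [pt]

@[simp] lemma pt_apply_one (x y : ℝ) : pt x y 1 = y := by simp [pt]

theorem convexHull_isoscelesTriangle {a h : ℝ} (ha : 0 < a) (hh : 0 < h) :
    convexHull ℝ {pt (-a) h, pt a h, (0 : EuclideanSpace ℝ (Fin 2))} =
      {p | h * |p 0| ≤ a * p 1 ∧ p 1 ≤ h} := by
  apply subset_antisymm
  · refine convexHull_min ?_ ?_
    · rintro p (rfl | rfl | rfl) <;> simp [abs_of_pos ha, hh.le, mul_comm]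
    · rintro p ⟨hp, hp'⟩ q ⟨hq, hq'⟩ s t hs ht hst
      have habs : |s * p 0 + t * q 0| ≤ s * |p 0| + t * |q 0| := by
        simpa [abs_mul, abs_of_nonneg hs, abs_of_nonneg ht] using
          abs_add_le (s * p 0) (t * q 0)
      simp only [mem_ofPred_eq, PiLp.add_apply, PiLp.smul_apply, smul_eq_mul]
      constructor
      · nlinarith [mul_le_mul_of_nonneg_left habs hh.le]
      · nlinarith
  · rintro p ⟨hp, hp'⟩
    have hx : |p 0 / a| ≤ p 1 / h := by
      rw [abs_div, abs_of_pos ha, div_le_div_iff₀ ha hh]; linarith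
    have hy : p 1 / h ≤ 1 := (div_le_one hh).2 hp'
    obtain ⟨hx₁, hx₂⟩ := abs_le.mp hx
    -- barycentric coordinates of `p` with respect to the three vertices
    set w := ![(p 1 / h - p 0 / a) / 2, (p 1 / h + p 0 / a) / 2, 1 - p 1 / h]
    set z := ![pt (-a) h, pt a h, 0]
    have hp : p = ∑ i, w i • z i := by
      ext i; fin_cases i <;> simp [w, z, Fin.sum_univ_three] <;> field_simp <;> ring
    rw [hp]
    refine (convex_convexHull ℝ _).sum_mem (fun i _ => ?_) (by simp [w, Fin.sum_univ_three]; ring)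
      (fun i _ => subset_convexHull ℝ _ ?_)
    · fin_cases i <;> simp [w] <;> linarith
    · fin_cases i <;> simp [z]

theorem mul_sin_arctan_le_iff {r c y : ℝ} (hr : 0 ≤ r) (hc : 0 < c) (hy : 0 ≤ y) :
    r * sin (arctan c) ≤ y ↔ r ^ 2 ≤ y ^ 2 + (y / c) ^ 2 := by
  have hs : 0 ≤ r * sin (arctan c) := mul_nonneg hr (sin_arctan_pos.2 hc).le
  have hy' : (y ^ 2 + (y / c) ^ 2) * c ^ 2 = y ^ 2 * (1 + c ^ 2) := by field_simp; ring
  rw [← pow_le_pow_iff_left₀ hs hy two_ne_zero, sin_arctan, mul_pow, div_pow,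
    sq_sqrt (by positivity), mul_div_assoc', div_le_iff₀ (by positivity), ← hy',
    mul_le_mul_iff_of_pos_right (by positivity)]

theorem mem_triangle_diff_disk_iff {r δ x y : ℝ} (hδ : 0 < δ) (hδr : δ < r) :
    (δ * |x| ≤ 1 / 2 * y ∧ y ≤ δ) ∧ ¬ x ^ 2 + y ^ 2 < r ^ 2 ↔
      y ∈ Icc (r * sin (arctan (2 * δ))) δ ∧ |x| ∈ Icc (√(r ^ 2 - y ^ 2)) (y / (2 * δ)) := by
  have hx_iff : |x| ≤ y / (2 * δ) ↔ δ * |x| ≤ 1 / 2 * y := by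
    rw [le_div_iff₀ (by positivity)]; constructor <;> intro h <;> linarith
  constructor
  · rintro ⟨⟨hleg, hbase⟩, hdisk⟩
    have hy : 0 ≤ y := by nlinarith [abs_nonneg x]
    have hx := hx_iff.2 hleg
    have hx_sq : x ^ 2 ≤ (y / (2 * δ)) ^ 2 := by
      rw [← sq_abs]; exact pow_le_pow_left₀ (abs_nonneg x) hx 2
    refine ⟨⟨(mul_sin_arctan_le_iff (hδ.trans hδr).le (by positivity) hy).2 (by linarith),
      hbase⟩, ?_, hx⟩
    rw [← sqrt_sq (abs_nonneg x), sq_abs]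
    exact sqrt_le_sqrt (by linarith)
  · rintro ⟨⟨-, hbase⟩, hchord, hx⟩
    refine ⟨⟨hx_iff.1 hx, hbase⟩, ?_⟩
    rw [sqrt_le_left (abs_nonneg x), sq_abs] at hchord
    linarith

theorem EuclideanSpace.volume_preimage_coords_finTwo (s : Set (ℝ × ℝ)) :
    volume ((fun p : EuclideanSpace ℝ (Fin 2) => (p 0, p 1)) ⁻¹' s) = volume s :=
  ((volume_preserving_finTwoArrow ℝ).comp
    (EuclideanSpace.volume_preserving_symm_measurableEquiv_toLp (Fin 2))).measure_preimage_equiv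
    (f := (MeasurableEquiv.toLp 2 (Fin 2 → ℝ)).symm.trans MeasurableEquiv.finTwoArrow) s

theorem volume_setOf_abs_mem_Icc {a b : ℝ} (ha : 0 < a) :
    volume {x : ℝ | |x| ∈ Icc a b} = ENNReal.ofReal (2 * (b - a)) := by
  have hunion : {x : ℝ | |x| ∈ Icc a b} = Icc (-b) (-a) ∪ Icc a b := by
    ext x
    simp only [mem_ofPred_eq, mem_union, mem_Icc]
    cases abs_cases x <;> grind
  have hdisj : Disjoint (Icc (-b) (-a)) (Icc a b) :=
    disjoint_left.2 fun x hx hx' => by linarith [hx.2, hx'.1]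
  rw [hunion, measure_union hdisj measurableSet_Icc, Real.volume_Icc, Real.volume_Icc]
  rcases le_total a b with hab | hba
  · rw [← ENNReal.ofReal_add (by linarith) (by linarith)]; ring_nf
  · simp [ENNReal.ofReal_of_nonpos, hba]

theorem volume_setOf_abs_mem_Icc_prod {s : Set ℝ} {f g : ℝ → ℝ} (hs : MeasurableSet s)
    (hf : Measurable f) (hg : Measurable g) (hf₀ : ∀ y ∈ s, 0 < f y)
    (hfg : ∀ y ∈ s, f y ≤ g y) (hint : IntegrableOn (fun y => g y - f y) s) :
    volume {p : ℝ × ℝ | p.2 ∈ s ∧ |p.1| ∈ Icc (f p.2) (g p.2)} =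
      ENNReal.ofReal (∫ y in s, 2 * (g y - f y)) := by
  have hm : MeasurableSet {p : ℝ × ℝ | p.2 ∈ s ∧ |p.1| ∈ Icc (f p.2) (g p.2)} :=
    (measurable_snd hs).inter <|
      (measurableSet_le (hf.comp measurable_snd) measurable_fst.abs).inter
        (measurableSet_le measurable_fst.abs (hg.comp measurable_snd))
  have hslice : ∀ y, volume ((fun x => (x, y)) ⁻¹'
      {p : ℝ × ℝ | p.2 ∈ s ∧ |p.1| ∈ Icc (f p.2) (g p.2)}) =
        s.indicator (fun y => ENNReal.ofReal (2 * (g y - f y))) y := by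
    intro y
    by_cases hy : y ∈ s
    · simpa [hy] using volume_setOf_abs_mem_Icc (b := g y) (hf₀ y hy)
    · simp [hy]
  rw [Measure.volume_eq_prod, Measure.prod_apply_symm hm]
  simp_rw [hslice]
  rw [lintegral_indicator hs, ← ofReal_integral_eq_lintegral_ofReal (hint.const_mul 2)
    ((ae_restrict_iff' hs).2 (ae_of_all _ fun y hy => by simp [hfg y hy]))]

theorem hasDerivAt_mul_sqrt_sq_sub_sq_add_sq_mul_arcsin {r y : ℝ} (hy : y ∈ Ioo (-r) r) :
    HasDerivAt (fun y => y * √(r ^ 2 - y ^ 2) + r ^ 2 * arcsin (y / r))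
      (2 * √(r ^ 2 - y ^ 2)) y := by
  obtain ⟨hy₁, hy₂⟩ := hy
  have hr : 0 < r := by linarith
  have hpos : 0 < r ^ 2 - y ^ 2 := by nlinarith
  have hsqrt : HasDerivAt (fun y => √(r ^ 2 - y ^ 2)) (-y / √(r ^ 2 - y ^ 2)) y := by
    convert ((hasDerivAt_pow 2 y).const_sub (r ^ 2)).sqrt hpos.ne' using 1
    field_simp; ring
  have harcsin : HasDerivAt (fun y => arcsin (y / r)) (1 / √(r ^ 2 - y ^ 2)) y := by
    have h₁ : y / r ≠ -1 := by rw [ne_eq, div_eq_iff hr.ne']; linarith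
    have h₂ : y / r ≠ 1 := by rw [ne_eq, div_eq_iff hr.ne']; linarith
    refine ((hasDerivAt_arcsin h₁ h₂).comp y ((hasDerivAt_id y).div_const r)).congr_deriv ?_
    rw [show 1 - (y / r) ^ 2 = (r ^ 2 - y ^ 2) / r ^ 2 by field_simp,
      sqrt_div hpos.le, sqrt_sq hr.le]
    field_simp
  refine (((hasDerivAt_id y).mul hsqrt).add (harcsin.const_mul (r ^ 2))).congr_deriv ?_
  have := sq_sqrt hpos.le
  field_simp
  simp only [id]
  linear_combination -this

theorem integral_two_mul_div_sub_sqrt_sq_sub_sq {r δ : ℝ} (hδ : 0 < δ) (hδr : δ < r) :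
    ∫ y in r * sin (arctan (2 * δ))..δ, 2 * (y / (2 * δ) - √(r ^ 2 - y ^ 2)) =
      1 / 2 * δ - (δ * √(r ^ 2 - δ ^ 2) + (arcsin (δ / r) - arctan (2 * δ)) * r ^ 2) := by
  have hr : 0 < r := hδ.trans hδr
  set θ := arctan (2 * δ)
  have hcos : 0 < cos θ := cos_arctan_pos _
  have hsin : sin θ = 2 * δ * cos θ := by rw [sin_arctan, cos_arctan, mul_one_div]
  have hsin_sq : sin θ ^ 2 + cos θ ^ 2 = 1 := sin_sq_add_cos_sq θ
  have hsin_pos : 0 < sin θ := by rw [hsin]; positivity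
  have hsin_lt : sin θ < 1 := by nlinarith
  have hIoo : uIcc (r * sin θ) δ ⊆ Ioo (-r) r :=
    ordConnected_Ioo.uIcc_subset ⟨by nlinarith, by nlinarith⟩ ⟨by linarith, hδr⟩
  have hderiv : ∀ y ∈ uIcc (r * sin θ) δ, HasDerivAt
      (fun y => y ^ 2 / (2 * δ) - (y * √(r ^ 2 - y ^ 2) + r ^ 2 * arcsin (y / r)))
      (2 * (y / (2 * δ) - √(r ^ 2 - y ^ 2))) y := fun y hy =>
    (((hasDerivAt_pow 2 y).div_const (2 * δ)).sub
      (hasDerivAt_mul_sqrt_sq_sub_sq_add_sq_mul_arcsin (hIoo hy))).congr_deriv (by ring)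
  rw [intervalIntegral.integral_eq_sub_of_hasDerivAt hderiv
    (Continuous.intervalIntegrable (by fun_prop) _ _)]
  have hchord : √(r ^ 2 - (r * sin θ) ^ 2) = r * cos θ := by
    rw [show r ^ 2 - (r * sin θ) ^ 2 = (r * cos θ) ^ 2 by linear_combination -r ^ 2 * hsin_sq,
      sqrt_sq (by positivity)]
  have harcsin : arcsin (r * sin θ / r) = θ := by
    rw [mul_div_cancel_left₀ _ hr.ne',
      arcsin_sin (neg_pi_div_two_lt_arctan _).le (arctan_lt_pi_div_two _).le]
  rw [hchord, harcsin, hsin]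
  field_simp
  ring

/-- Exact area of the part outside the open disk `B_r` of the isosceles triangle with apex
at the origin and unit base at distance `δ` from the origin. -/
theorem isosceles_exterior_area (r δ : ℝ) (hδ : 0 < δ) (hδr : δ < r) (hr : r ≤ 1 / 2) :
    volume ((convexHull ℝ {pt (-(1 / 2)) δ, pt (1 / 2) δ, (0 : EuclideanSpace ℝ (Fin 2))})
        \ ball 0 r) =
      ENNReal.ofReal (1 / 2 * δ -
        (δ * Real.sqrt (r ^ 2 - δ ^ 2) +
          (Real.arcsin (δ / r) - Real.arctan (2 * δ)) * r ^ 2)) := by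
  have hr₀ : 0 < r := hδ.trans hδr
  set y₀ := r * sin (arctan (2 * δ))
  have hy₀ : 0 ≤ y₀ := mul_nonneg hr₀.le (sin_arctan_pos.2 (by positivity)).le
  have hy₀δ : y₀ ≤ δ := (mul_sin_arctan_le_iff hr₀.le (by positivity) hδ.le).2 <| by
    rw [show δ / (2 * δ) = 1 / 2 by field_simp]; nlinarith
  have hchord : ∀ y ∈ Icc y₀ δ, 0 < √(r ^ 2 - y ^ 2) ∧ √(r ^ 2 - y ^ 2) ≤ y / (2 * δ) :=
    fun y ⟨hy₀y, hyδ⟩ => ⟨sqrt_pos.2 (by nlinarith),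
      (sqrt_le_left (div_nonneg (hy₀.trans hy₀y) (by positivity))).2 <| by
        linarith [(mul_sin_arctan_le_iff hr₀.le (by positivity) (hy₀.trans hy₀y)).1 hy₀y]⟩
  have hset : convexHull ℝ {pt (-(1 / 2)) δ, pt (1 / 2) δ, (0 : EuclideanSpace ℝ (Fin 2))}
      \ ball 0 r = (fun p : EuclideanSpace ℝ (Fin 2) => (p 0, p 1)) ⁻¹'
        {q : ℝ × ℝ | q.2 ∈ Icc y₀ δ ∧ |q.1| ∈ Icc (√(r ^ 2 - q.2 ^ 2)) (q.2 / (2 * δ))} := by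
    ext p
    rw [mem_sdiff, convexHull_isoscelesTriangle one_half_pos hδ,
      EuclideanSpace.ball_zero_eq r hr₀.le]
    simp only [mem_ofPred_eq, mem_preimage, Fin.sum_univ_two]
    exact mem_triangle_diff_disk_iff hδ hδr
  rw [hset, EuclideanSpace.volume_preimage_coords_finTwo,
    volume_setOf_abs_mem_Icc_prod measurableSet_Icc (by fun_prop) (by fun_prop)
      (fun y hy => (hchord y hy).1) (fun y hy => (hchord y hy).2)
      (Continuous.integrableOn_Icc (by fun_prop)),
    integral_Icc_eq_integral_Ioc, ← intervalIntegral.integral_of_le hy₀δ,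
    integral_two_mul_div_sub_sqrt_sq_sub_sq hδ hδr]
end
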